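/- arXiv:1911.01131 — 3 statements merged into one kernel-verified Lean document; each statement's English description precedes it below -/
import Mathlib

section
/- Let p be an odd prime and α, β nonnegative integers. If 3·p^α + 2 = p^β, then α = 0, β = 1, and p = 5. -/
/-!
If `α ≥ 1`, then `p` divides both `3 p^α` and `p^β`, hence divides `2`, which an odd `p ≠ 1` cannot.
So `α = 0` and `p^β = 5`, and since `5` is prime this forces `p = 5` and `β = 1`.
-/

theorem Nat.dvd_of_mul_pow_add_eq_pow {p a b α β : ℕ} (hα : α ≠ 0) (hβ : β ≠ 0)
    (h : a * p ^ α + b = p ^ β) : p ∣ b :=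
  (Nat.dvd_add_right (dvd_mul_of_dvd_right (dvd_pow_self p hα) a)).mp (h ▸ dvd_pow_self p hβ)

theorem stmt_0_general (p : ℕ) (hodd : Odd p) (α β : ℕ)
    (h : 3 * p ^ α + 2 = p ^ β) : α = 0 ∧ β = 1 ∧ p = 5 := by
  have hβ : β ≠ 0 := by
    rintro rfl
    rw [pow_zero] at h
    omega
  have hα : α = 0 := by
    by_contra hα
    have hp : p = 1 :=
      hodd.coprime_two_right.eq_one_of_dvd (Nat.dvd_of_mul_pow_add_eq_pow hα hβ h)
    simp [hp] at h
  subst hα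
  obtain ⟨hp, hβ⟩ := Nat.prime_five.pow_eq_iff.mp (by simpa using h.symm)
  exact ⟨rfl, hβ, hp⟩

theorem stmt_0 (p : ℕ) (hp : p.Prime) (hodd : Odd p) (α β : ℕ)
    (h : 3 * p ^ α + 2 = p ^ β) : α = 0 ∧ β = 1 ∧ p = 5 :=
  stmt_0_general p hodd α β h
end

section
/- Let α, β be nonnegative integers. If 5·3^α + 4 = 3^β, then α = 0 and β = 2. -/
theorem stmt_2 (α β : ℕ) (h : 5 * 3 ^ α + 4 = 3 ^ β) : α = 0 ∧ β = 2 := by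
  have hβ : β ≠ 0 := by
    rintro rfl
    omega
  -- For `α ≠ 0` the left side is `1 mod 3`, while `3 ^ β` is `0 mod 3`.
  have hα : α = 0 := by
    by_contra hα
    have hmod := congrArg (· % 3) h
    simp [Nat.add_mod, Nat.mul_mod, Nat.pow_mod, zero_pow hα, zero_pow hβ] at hmod
  subst hα
  exact ⟨rfl, Nat.pow_right_injective (a := 3) le_add_self (by simpa using h.symm)⟩
end

section
/- Let e ≥ 2. Over F_{3^e}, the polynomial f(X) = X^4 + aX^2 with a ∈ F_{3^e}^* is not planar: there exist nonzero x, y ∈ F_{3^e} with x^2 + y^2 = a, so that the difference function Δ_f(x, y) = f(x+y) − f(x) − f(y) vanishes at a point with xy ≠ 0. -/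
/-!
In characteristic 3 the difference function of `X ^ 4 + a * X ^ 2` is `x * y * (x ^ 2 + y ^ 2 - a)`,
so it suffices that every `a ≠ 0` in a finite field of odd order `q > 5` is a sum of two nonzero
squares. It is enough to do this for one element of each square class. For the squares, the
rational parametrisation `((1 - s ^ 2) / (1 + s ^ 2), 2 * s / (1 + s ^ 2))` of the unit circle
gives a point with both coordinates nonzero as soon as `s ≠ 0` and `s ^ 4 ≠ 1`, and such an `s`
exists once `q > 5`. For the non-squares, some `1 + l ^ 2` with `l ≠ 0` is a non-square, and
`a` is a square multiple of it.
-/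

open Finset Polynomial

theorem exists_sq_add_sq_eq_one_of_pow_four_ne_one {F : Type*} [Field F] (h2 : (2 : F) ≠ 0)
    {s : F} (hs0 : s ≠ 0) (hs : s ^ 4 ≠ 1) : ∃ x y : F, x ≠ 0 ∧ y ≠ 0 ∧ x ^ 2 + y ^ 2 = 1 := by
  have hden : 1 + s ^ 2 ≠ 0 := fun h => hs (by linear_combination (s ^ 2 - 1) * h)
  have hnum : 1 - s ^ 2 ≠ 0 := fun h => hs (by linear_combination (-1 - s ^ 2) * h)
  refine ⟨(1 - s ^ 2) / (1 + s ^ 2), 2 * s / (1 + s ^ 2), div_ne_zero hnum hden,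
    div_ne_zero (mul_ne_zero h2 hs0) hden, ?_⟩
  field_simp
  ring

namespace FiniteField

variable {F : Type*} [Field F] [Fintype F]

theorem exists_ne_zero_pow_four_ne_one (hF : 5 < Fintype.card F) :
    ∃ s : F, s ≠ 0 ∧ s ^ 4 ≠ 1 := by
  classical
  have hcard : #(insert 0 (nthRootsFinset 4 (1 : F))) < #(univ : Finset F) := by
    calc #(insert 0 (nthRootsFinset 4 (1 : F)))
        ≤ #(nthRootsFinset 4 (1 : F)) + 1 := card_insert_le _ _
      _ ≤ 4 + 1 := by
          gcongr
          rw [nthRootsFinset_def]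
          exact (Multiset.toFinset_card_le _).trans (card_nthRoots 4 1)
      _ < #(univ : Finset F) := by rwa [card_univ]
  obtain ⟨s, -, hs⟩ := exists_mem_notMem_of_card_lt_card hcard
  rw [mem_insert, mem_nthRootsFinset (by norm_num), not_or] at hs
  exact ⟨s, hs⟩

theorem isSquare_mul_of_not_isSquare {a b : F} (ha : ¬IsSquare a) (hb : ¬IsSquare b) :
    IsSquare (a * b) := by
  classical
  have ha0 : a ≠ 0 := by rintro rfl; exact ha IsSquare.zero
  have hb0 : b ≠ 0 := by rintro rfl; exact hb IsSquare.zero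
  rw [← quadraticChar_one_iff_isSquare (mul_ne_zero ha0 hb0), map_mul,
    quadraticChar_neg_one_iff_not_isSquare.mpr ha, quadraticChar_neg_one_iff_not_isSquare.mpr hb]
  norm_num

/-- If the squares were closed under `c ↦ 1 + c`, they would be closed under addition; then
`-1 = 1 + ⋯ + 1` is a square `i ^ 2`, and `x = ((x + 1) / 2) ^ 2 + (i * (x - 1) / 2) ^ 2` would
make every element a square. -/
theorem exists_isSquare_not_isSquare_one_add (hF : ringChar F ≠ 2) :
    ∃ c : F, IsSquare c ∧ ¬IsSquare (1 + c) := by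
  by_contra! H
  have hadd : ∀ u c : F, IsSquare u → IsSquare c → IsSquare (u + c) := by
    rintro u c ⟨v, rfl⟩ ⟨w, rfl⟩
    rcases eq_or_ne v 0 with rfl | hv
    · simp
    obtain ⟨z, hz⟩ := H ((w / v) * (w / v)) (IsSquare.mul_self _)
    exact ⟨v * z, by rw [mul_mul_mul_comm, ← hz]; field_simp⟩
  have hnat : ∀ n : ℕ, IsSquare (n : F) := by
    intro n
    induction n with
    | zero => simp
    | succ n ih => simpa [add_comm] using hadd 1 n IsSquare.one ih
  obtain ⟨i, hi⟩ : IsSquare (-1 : F) := by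
    obtain ⟨j, hj⟩ := hnat (ringChar F - 1)
    refine ⟨j, ?_⟩
    rw [← hj, Nat.cast_sub (CharP.prime_ringChar F).one_le, ringChar.Nat.cast_ringChar, zero_sub,
      Nat.cast_one]
  obtain ⟨g, hg⟩ := exists_nonsquare hF
  have h2 : (2 : F) ≠ 0 := Ring.two_ne_zero hF
  apply hg
  convert hadd _ _ (IsSquare.mul_self ((g + 1) / 2)) (IsSquare.mul_self (i * (g - 1) / 2)) using 1
  field_simp
  linear_combination (g - 1) ^ 2 * hi

theorem exists_sq_add_sq_eq_of_ne_zero (hF : ringChar F ≠ 2) (hcard : 5 < Fintype.card F) {a : F}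
    (ha : a ≠ 0) : ∃ x y : F, x ≠ 0 ∧ y ≠ 0 ∧ x ^ 2 + y ^ 2 = a := by
  by_cases hsq : IsSquare a
  · obtain ⟨b, rfl⟩ := hsq
    have hb : b ≠ 0 := by rintro rfl; simp at ha
    obtain ⟨s, hs0, hs⟩ := exists_ne_zero_pow_four_ne_one hcard
    obtain ⟨x, y, hx, hy, hxy⟩ :=
      exists_sq_add_sq_eq_one_of_pow_four_ne_one (Ring.two_ne_zero hF) hs0 hs
    exact ⟨b * x, b * y, mul_ne_zero hb hx, mul_ne_zero hb hy, by
      linear_combination b ^ 2 * hxy⟩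
  · obtain ⟨c, ⟨l, rfl⟩, hc⟩ := exists_isSquare_not_isSquare_one_add hF
    have hl : l ≠ 0 := by rintro rfl; simp at hc
    have hd : 1 + l * l ≠ 0 := by intro h; rw [h] at hc; exact hc IsSquare.zero
    obtain ⟨r, hr⟩ := isSquare_mul_of_not_isSquare hsq hc
    have hr0 : r ≠ 0 := by rintro rfl; simp [ha, hd] at hr
    refine ⟨r / (1 + l * l), l * r / (1 + l * l), div_ne_zero hr0 hd,
      div_ne_zero (mul_ne_zero hl hr0) hd, ?_⟩
    rw [div_pow, div_pow, ← add_div, div_eq_iff (pow_ne_zero 2 hd)]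
    linear_combination (-(1 + l * l)) * hr

end FiniteField

theorem pow_four_add_mul_sq_polarization_of_three_eq_zero {R : Type*} [CommRing R]
    (h3 : (3 : R) = 0) (a x y : R) :
    ((x + y) ^ 4 + a * (x + y) ^ 2) - (x ^ 4 + a * x ^ 2) - (y ^ 4 + a * y ^ 2) =
      x * y * (x ^ 2 + y ^ 2 - a) := by
  linear_combination (x ^ 3 * y + 2 * x ^ 2 * y ^ 2 + x * y ^ 3 + a * x * y) * h3

theorem stmt_18 (F : Type*) [Field F] [Fintype F] (e : ℕ) (he : 2 ≤ e)
    (hcard : Fintype.card F = 3 ^ e) (a : F) (ha : a ≠ 0) :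
    (∃ x y : F, x ≠ 0 ∧ y ≠ 0 ∧ x ^ 2 + y ^ 2 = a ∧
      ((x + y) ^ 4 + a * (x + y) ^ 2) - (x ^ 4 + a * x ^ 2) - (y ^ 4 + a * y ^ 2) = 0) ∧
    ¬ ∀ ε : F, ε ≠ 0 → Function.Bijective
        (fun x => ((x + ε) ^ 4 + a * (x + ε) ^ 2) - (x ^ 4 + a * x ^ 2) - (ε ^ 4 + a * ε ^ 2)) := by
  have hchar : CharP F 3 := charP_of_card_eq_prime_pow hcard
  have h3 : (3 : F) = 0 := by exact_mod_cast CharP.cast_eq_zero F 3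
  have hbig : 5 < Fintype.card F :=
    hcard ▸ lt_of_lt_of_le (by norm_num) (Nat.pow_le_pow_right (by norm_num) he)
  obtain ⟨x, y, hx, hy, hxy⟩ := FiniteField.exists_sq_add_sq_eq_of_ne_zero
    (by rw [ringChar.eq_iff.mpr hchar]; norm_num) hbig ha
  have hΔ : ((x + y) ^ 4 + a * (x + y) ^ 2) - (x ^ 4 + a * x ^ 2) - (y ^ 4 + a * y ^ 2) = 0 := by
    rw [pow_four_add_mul_sq_polarization_of_three_eq_zero h3, hxy, sub_self, mul_zero]
  refine ⟨⟨x, y, hx, hy, hxy, hΔ⟩, fun hplanar => hx ((hplanar y hy).injective ?_)⟩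
  simp only [hΔ]
  ring
end
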